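/- If all principal minors of an n×n matrix M over a field K of characteristic zero are nonzero, then the quotient S/I_M, where I_M = (y_i Σ_j M_{ij} y_j : i ∈ [n]), has Hilbert series (1+t)^n; that is, its degree-d component has dimension binomial(n, d) and it has total dimension 2^n over K. -/

import Mathlib

/-!
Write `H_I` for the Hilbert series of `S/I`, so that `H_0 = 1/(1-t)^n`.

If `a_i ≥ 2` and `J = supp a`, invertibility of `M_J` gives a combination of the `L_j`, `j ∈ J`,
equal to `y_i` plus variables outside `J`. Multiplying it by `y^(a - e_i)`, which is divisible by
every `y_j` with `j ∈ J`, rewrites `y^a` modulo `I_M` through monomials of larger support. So the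
squarefree monomials of degree `d` span `(S/I_M)_d`, and `H_{I_M} ≤ (1+t)^n` coefficientwise.

For a homogeneous ideal `I` and a form `g` of degree `e`, the inclusions
`(I + (g))_d ⊆ I_d + g S_{d-e}` and `g I_{d-e} ⊆ I_d` give `(1 - t^e) H_I ≤ H_{I+(g)}`. As
`1/(1-t²)` has nonnegative coefficients, adding the `n` quadrics one at a time yields
`1/(1-t)^n ≤ H_{I_M}/(1-t²)^n`, while the upper bound gives the reverse inequality because
`(1+t)/(1-t²) = 1/(1-t)`. Hence `H_{I_M} = (1+t)^n`, and counting dimensions degree by degree,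
the squarefree monomials form a basis of `S/I_M`.
-/

open MvPolynomial Finset
open scoped PowerSeries

attribute [local instance] MvPolynomial.gradedAlgebra

namespace PowerSeries

def CoeffNonneg (f : ℤ⟦X⟧) : Prop := ∀ d, 0 ≤ coeff d f

theorem CoeffNonneg.add {f g : ℤ⟦X⟧} (hf : CoeffNonneg f) (hg : CoeffNonneg g) :
    CoeffNonneg (f + g) := fun d => by
  rw [map_add]; exact add_nonneg (hf d) (hg d)

theorem CoeffNonneg.mul {f g : ℤ⟦X⟧} (hf : CoeffNonneg f) (hg : CoeffNonneg g) :
    CoeffNonneg (f * g) := fun d => by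
  rw [coeff_mul]; exact Finset.sum_nonneg fun p _ => mul_nonneg (hf _) (hg _)

theorem CoeffNonneg.pow {f : ℤ⟦X⟧} (hf : CoeffNonneg f) (k : ℕ) : CoeffNonneg (f ^ k) := by
  induction k with
  | zero => intro d; rw [pow_zero, coeff_one]; split_ifs <;> norm_num
  | succ k ih => rw [pow_succ]; exact ih.mul hf

theorem coeff_one_add_X_pow {R : Type*} [CommSemiring R] (n d : ℕ) :
    coeff d ((1 + X : R⟦X⟧) ^ n) = n.choose d := by
  rw [← Polynomial.coe_X, ← Polynomial.coe_one, ← Polynomial.coe_add, ← Polynomial.coe_pow,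
    Polynomial.coeff_coe, Polynomial.coeff_one_add_X_pow]

/-- `1 / (1 - X²)`. -/
def evenSeries : ℤ⟦X⟧ := mk fun d => if Even d then 1 else 0

theorem coeffNonneg_evenSeries : CoeffNonneg evenSeries := fun d => by
  rw [evenSeries, coeff_mk]; split_ifs <;> norm_num

theorem evenSeries_mul_one_sub_X_sq : evenSeries * (1 - X ^ 2) = 1 := by
  ext d
  rw [mul_sub, mul_one, map_sub, mul_comm, coeff_X_pow_mul', coeff_one, evenSeries]
  rcases d with _ | _ | d <;> simp [Nat.even_add_one, parity_simps]

theorem evenSeries_mul_one_add_X : evenSeries * (1 + X) = mk 1 := by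
  ext d
  rw [mul_add, mul_one, map_add, mul_comm, evenSeries]
  rcases d with _ | d
  · simp
  · by_cases h : Even d <;> simp [coeff_succ_X_mul, Nat.even_add_one, h]

theorem eq_one_add_X_pow_of_coeffNonneg {f : ℤ⟦X⟧} {n : ℕ}
    (hle : CoeffNonneg ((1 + X) ^ n - f))
    (hge : CoeffNonneg (evenSeries ^ n * f - mk 1 ^ n)) : f = (1 + X) ^ n := by
  have hzero : evenSeries ^ n * ((1 + X) ^ n - f) = 0 := by
    ext d
    have h1 := (coeffNonneg_evenSeries.pow n).mul hle d
    have h2 := hge d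
    rw [mul_sub, ← mul_pow, evenSeries_mul_one_add_X] at h1
    rw [mul_sub, ← mul_pow, evenSeries_mul_one_add_X, map_zero]
    rw [map_sub] at h1 h2 ⊢
    omega
  have hE : evenSeries ^ n ≠ 0 := pow_ne_zero _ fun h0 => by
    simpa [h0] using evenSeries_mul_one_sub_X_sq
  exact (sub_eq_zero.mp ((mul_eq_zero.mp hzero).resolve_left hE)).symm

end PowerSeries

open PowerSeries (CoeffNonneg evenSeries coeffNonneg_evenSeries evenSeries_mul_one_sub_X_sq
  eq_one_add_X_pow_of_coeffNonneg)

namespace Submodule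

variable {K V W : Type*} [Field K] [AddCommGroup V] [Module K V] [AddCommGroup W] [Module K W]

theorem finrank_map_add_finrank_inf_ker (f : V →ₗ[K] W) (Y : Submodule K V)
    [FiniteDimensional K Y] :
    Module.finrank K (Y.map f) + Module.finrank K ↥(Y ⊓ LinearMap.ker f)
      = Module.finrank K Y := by
  have h := LinearMap.finrank_range_add_finrank_ker (f.domRestrict Y)
  rwa [LinearMap.range_domRestrict, LinearMap.ker_domRestrict,
    (equivSubtypeMap Y _).finrank_eq, map_comap_subtype] at h

theorem finrank_sup_map_add_finrank_le (f : V →ₗ[K] W) (A : Submodule K W)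
    (B Y : Submodule K V)
    [FiniteDimensional K A] [FiniteDimensional K Y] (hBY : B ≤ Y) (hBA : B.map f ≤ A) :
    Module.finrank K ↥(A ⊔ Y.map f) + Module.finrank K B
      ≤ Module.finrank K A + Module.finrank K Y := by
  have hsup := finrank_map_add_finrank_inf_ker A.mkQ (A ⊔ Y.map f)
  rw [ker_mkQ, inf_eq_right.mpr le_sup_left, map_sup, mkQ_map_self, bot_sup_eq,
    ← map_comp] at hsup
  have hY := finrank_map_add_finrank_inf_ker (A.mkQ ∘ₗ f) Y
  have hB : Module.finrank K B ≤ Module.finrank K ↥(Y ⊓ LinearMap.ker (A.mkQ ∘ₗ f)) := by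
    refine finrank_mono (le_inf hBY ?_)
    rw [LinearMap.ker_comp, ker_mkQ, ← map_le_iff_le_comap]
    exact hBA
  omega

end Submodule

namespace Finsupp

variable {σ : Type*} {a : σ →₀ ℕ} {i : σ}

theorem degree_sub_single_add_single (hi : 1 ≤ a i) (k : σ) :
    (a - single i 1 + single k 1).degree = a.degree := by
  conv_rhs => rw [← tsub_add_cancel_of_le (single_le_iff.mpr hi)]
  rw [map_add, map_add, degree_single, degree_single]

theorem support_ssubset_support_sub_single_add_single (hi : 2 ≤ a i) {k : σ}
    (hk : k ∉ a.support) : a.support ⊂ (a - single i 1 + single k 1).support := by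
  classical
  rw [Finset.ssubset_iff_of_subset]
  · exact ⟨k, by simp, hk⟩
  · intro x hx
    rw [mem_support_iff] at hx ⊢
    simp only [coe_add, coe_tsub, Pi.add_apply, Pi.sub_apply, single_apply]
    split_ifs <;> subst_vars <;> omega

theorem degree_eq_card_support (ha : ∀ x, a x ≤ 1) : a.degree = #a.support := by
  rw [degree_apply, card_eq_sum_ones]
  exact Finset.sum_congr rfl fun x hx =>
    le_antisymm (ha x) (Nat.one_le_iff_ne_zero.mpr (mem_support_iff.mp hx))

end Finsupp

namespace MvPolynomial

theorem homogeneousComponent_mul_of_isHomogeneous {σ R : Type*} [CommSemiring R]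
    {g : MvPolynomial σ R} {e : ℕ} (hg : g.IsHomogeneous e) (u : MvPolynomial σ R) (d : ℕ) :
    homogeneousComponent d (g * u) = if e ≤ d then g * homogeneousComponent (d - e) u else 0 := by
  split_ifs with hed
  · rw [← decomposition.decompose'_apply, ← decomposition.decompose'_apply]
    exact DirectSum.coe_decompose_mul_of_left_mem_of_le (homogeneousSubmodule σ R)
      (a_mem := hg) hed
  · rw [← decomposition.decompose'_apply]
    exact DirectSum.coe_decompose_mul_of_left_mem_of_not_le (homogeneousSubmodule σ R)
      (a_mem := hg) hed

variable {σ K : Type*} [Field K]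

instance [Finite σ] (d : ℕ) : FiniteDimensional K (homogeneousSubmodule σ K d) :=
  Module.Finite.iff_fg.mpr (homogeneousSubmodule_fg σ K d)

theorem finrank_homogeneousSubmodule [Fintype σ] [DecidableEq σ] (d : ℕ) :
    Module.finrank K (homogeneousSubmodule σ K d) = #((univ : Finset σ).finsuppAntidiag d) := by
  have hset : {a : σ →₀ ℕ | a.degree = d} = ↑((univ : Finset σ).finsuppAntidiag d) := by
    ext a; simp [Finsupp.degree_eq_sum]
  rw [homogeneousSubmodule_eq_finsupp_supported, hset]
  exact (Module.finrank_eq_nat_card_basis (basisRestrictSupport K _)).trans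
    (Nat.card_eq_finsetCard _)

noncomputable def hilbertSeries (I : Ideal (MvPolynomial σ K)) : ℤ⟦X⟧ :=
  PowerSeries.mk fun d =>
    Module.finrank K ((homogeneousSubmodule σ K d).map (I.restrictScalars K).mkQ)

theorem coeff_hilbertSeries [Finite σ] (I : Ideal (MvPolynomial σ K)) (d : ℕ) :
    PowerSeries.coeff d (hilbertSeries I) = (Module.finrank K (homogeneousSubmodule σ K d) : ℤ)
      - Module.finrank K ↥(homogeneousSubmodule σ K d ⊓ I.restrictScalars K) := by
  have h := Submodule.finrank_map_add_finrank_inf_ker (I.restrictScalars K).mkQ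
    (homogeneousSubmodule σ K d)
  rw [Submodule.ker_mkQ] at h
  rw [hilbertSeries, PowerSeries.coeff_mk]
  omega

theorem hilbertSeries_bot [Fintype σ] [DecidableEq σ] :
    hilbertSeries (⊥ : Ideal (MvPolynomial σ K)) = PowerSeries.mk 1 ^ Fintype.card σ := by
  ext d
  rw [coeff_hilbertSeries, Submodule.restrictScalars_bot, inf_bot_eq, finrank_bot,
    finrank_homogeneousSubmodule, ← Finset.card_univ, ← Finset.prod_const,
    PowerSeries.coeff_prod]
  simp

section SupSpanSingleton

variable {I : Ideal (MvPolynomial σ K)} {g : MvPolynomial σ K} {e : ℕ}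

theorem exists_homogeneousComponent_sub_mem_of_mem_sup_span_singleton
    (hI : I.IsHomogeneous (homogeneousSubmodule σ K)) (hg : g.IsHomogeneous e)
    {x : MvPolynomial σ K} (hx : x ∈ I ⊔ Ideal.span {g}) (d : ℕ) :
    ∃ u : MvPolynomial σ K, homogeneousComponent d x
      - (if e ≤ d then g * homogeneousComponent (d - e) u else 0) ∈ I := by
  obtain ⟨y, hy, z, hz, rfl⟩ := Submodule.mem_sup.mp hx
  obtain ⟨u, rfl⟩ := Ideal.mem_span_singleton'.mp hz
  refine ⟨u, ?_⟩
  rw [map_add, mul_comm, homogeneousComponent_mul_of_isHomogeneous hg, add_sub_cancel_right]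
  exact homogeneousComponent_mem_of_mem hI hy d

theorem homogeneousSubmodule_inf_sup_span_singleton_le
    (hI : I.IsHomogeneous (homogeneousSubmodule σ K)) (hg : g.IsHomogeneous e) (d : ℕ) :
    homogeneousSubmodule σ K (d + e) ⊓ (I ⊔ Ideal.span {g}).restrictScalars K
      ≤ homogeneousSubmodule σ K (d + e) ⊓ I.restrictScalars K
        ⊔ (homogeneousSubmodule σ K d).map (LinearMap.mulLeft K g) := by
  rintro x ⟨hxd, hxJ⟩
  obtain ⟨u, hu⟩ :=
    exists_homogeneousComponent_sub_mem_of_mem_sup_span_singleton hI hg hxJ (d + e)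
  rw [if_pos (Nat.le_add_left e d), Nat.add_sub_cancel, homogeneousComponent_of_mem hxd,
    if_pos rfl] at hu
  refine Submodule.mem_sup.mpr ⟨_, ⟨?_, hu⟩, _,
    ⟨homogeneousComponent d u, homogeneousComponent_mem d u, rfl⟩, sub_add_cancel x _⟩
  exact Submodule.sub_mem _ hxd (add_comm e d ▸ hg.mul (homogeneousComponent_isHomogeneous d u))

theorem homogeneousSubmodule_inf_sup_span_singleton_le_of_lt
    (hI : I.IsHomogeneous (homogeneousSubmodule σ K)) (hg : g.IsHomogeneous e) {d : ℕ}
    (hd : d < e) :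
    homogeneousSubmodule σ K d ⊓ (I ⊔ Ideal.span {g}).restrictScalars K
      ≤ homogeneousSubmodule σ K d ⊓ I.restrictScalars K := by
  rintro x ⟨hxd, hxJ⟩
  obtain ⟨u, hu⟩ := exists_homogeneousComponent_sub_mem_of_mem_sup_span_singleton hI hg hxJ d
  rw [if_neg (not_le.mpr hd), sub_zero, homogeneousComponent_of_mem hxd, if_pos rfl] at hu
  exact ⟨hxd, hu⟩

theorem coeffNonneg_hilbertSeries_sup_span_singleton_sub [Finite σ]
    (hI : I.IsHomogeneous (homogeneousSubmodule σ K)) (hg : g.IsHomogeneous e) :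
    CoeffNonneg
      (hilbertSeries (I ⊔ Ideal.span {g}) - (1 - PowerSeries.X ^ e) * hilbertSeries I) := by
  intro d
  rw [map_sub, sub_mul, one_mul, map_sub, PowerSeries.coeff_X_pow_mul', coeff_hilbertSeries,
    coeff_hilbertSeries]
  split_ifs with hed
  · obtain ⟨c, rfl⟩ := Nat.exists_eq_add_of_le' hed
    rw [Nat.add_sub_cancel, coeff_hilbertSeries]
    have hJ := Submodule.finrank_mono (homogeneousSubmodule_inf_sup_span_singleton_le hI hg c)
    have hdim := Submodule.finrank_sup_map_add_finrank_le (LinearMap.mulLeft K g)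
      (homogeneousSubmodule σ K (c + e) ⊓ I.restrictScalars K)
      (homogeneousSubmodule σ K c ⊓ I.restrictScalars K) (homogeneousSubmodule σ K c)
      inf_le_left (by
        rintro _ ⟨b, ⟨hbc, hbI⟩, rfl⟩
        exact ⟨add_comm e c ▸ hg.mul hbc, I.mul_mem_left g hbI⟩)
    omega
  · have hJ := Submodule.finrank_mono
      (homogeneousSubmodule_inf_sup_span_singleton_le_of_lt hI hg (not_le.mp hed))
    omega

end SupSpanSingleton

theorem isHomogeneous_span_image {ι : Type*} {f : ι → MvPolynomial σ K} {e : ℕ}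
    (hf : ∀ i, (f i).IsHomogeneous e) (s : Set ι) :
    (Ideal.span (f '' s)).IsHomogeneous (homogeneousSubmodule σ K) :=
  Ideal.homogeneous_span _ _ fun _ ⟨i, _, hi⟩ => ⟨e, hi ▸ hf i⟩

theorem coeffNonneg_evenSeries_pow_mul_hilbertSeries_sub [Fintype σ] {ι : Type*}
    {f : ι → MvPolynomial σ K} (hf : ∀ i, (f i).IsHomogeneous 2) (s : Finset ι) :
    CoeffNonneg (evenSeries ^ #s * hilbertSeries (Ideal.span (f '' s))
      - hilbertSeries (⊥ : Ideal (MvPolynomial σ K))) := by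
  classical
  induction s using Finset.induction_on with
  | empty => simp [CoeffNonneg]
  | insert a s has ih =>
    have hstep := coeffNonneg_hilbertSeries_sup_span_singleton_sub
      (isHomogeneous_span_image hf s) (hf a)
    rw [coe_insert, Set.image_insert_eq, Ideal.span_insert, sup_comm, card_insert_of_notMem has]
    have hsplit : ∀ H H' P : ℤ⟦X⟧, evenSeries ^ (#s + 1) * H' - P
        = evenSeries ^ #s * (evenSeries * (H' - (1 - PowerSeries.X ^ 2) * H))
          + (evenSeries ^ #s * H - P) := fun H H' P => by
      linear_combination (evenSeries ^ #s * H) * evenSeries_mul_one_sub_X_sq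
    rw [hsplit (hilbertSeries (Ideal.span (f '' s)))]
    exact ((coeffNonneg_evenSeries.pow _).mul (coeffNonneg_evenSeries.mul hstep)).add ih

section Quadrics

variable [Fintype σ] (M : Matrix σ σ K)

/-- The linear form `L_i = ∑ⱼ M i j yⱼ`. -/
noncomputable def linearForm (i : σ) : MvPolynomial σ K := ∑ j, C (M i j) * X j

/-- The ideal `I_M = (y_i L_i)_i`. -/
noncomputable def quadricIdeal : Ideal (MvPolynomial σ K) :=
  Ideal.span (Set.range fun i => X i * linearForm M i)

theorem isHomogeneous_X_mul_linearForm (i : σ) : (X i * linearForm M i).IsHomogeneous 2 :=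
  (isHomogeneous_X K i).mul (IsHomogeneous.sum _ _ 1 fun j _ =>
    (isHomogeneous_C_mul_X (M i j) j))

theorem isHomogeneous_quadricIdeal :
    (quadricIdeal M).IsHomogeneous (homogeneousSubmodule σ K) := by
  simpa [quadricIdeal] using
    isHomogeneous_span_image (isHomogeneous_X_mul_linearForm M) Set.univ

theorem exists_sum_C_mul_linearForm_eq [DecidableEq σ] {J : Finset σ}
    (hJ : (M.submatrix (Subtype.val : J → σ) Subtype.val).det ≠ 0) {i : σ} (hi : i ∈ J) :
    ∃ (c : J → K) (B : σ → K),
      ∑ j : J, C (c j) * linearForm M j = X i + ∑ k ∈ Jᶜ, C (B k) * X k := by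
  set MJ := M.submatrix (Subtype.val : J → σ) Subtype.val
  set c : J → K := Matrix.vecMul (Pi.single ⟨i, hi⟩ 1) MJ⁻¹
  have hc : Matrix.vecMul c MJ = Pi.single ⟨i, hi⟩ 1 := by
    rw [Matrix.vecMul_vecMul, Matrix.nonsing_inv_mul _ (Ne.isUnit hJ), Matrix.vecMul_one]
  set B : σ → K := fun k => ∑ j : J, c j * M j k
  have hsum : ∑ j : J, C (c j) * linearForm M j = ∑ k, C (B k) * X k := by
    simp_rw [B, linearForm, Finset.mul_sum, ← mul_assoc, ← C_mul, map_sum, Finset.sum_mul]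
    exact Finset.sum_comm
  have hJpart : ∑ k ∈ J, C (B k) * X k = X i := by
    rw [← Finset.sum_coe_sort J]
    have hB : ∀ k : J, B k = Pi.single (M := fun _ => K) (⟨i, hi⟩ : J) 1 k := fun k =>
      congrFun hc k
    simp_rw [hB, Pi.single_apply, apply_ite C, ite_mul, map_one, map_zero, one_mul, zero_mul]
    rw [Finset.sum_ite_eq']
    simp
  refine ⟨c, B, ?_⟩
  rw [hsum, ← Finset.sum_add_sum_compl J, hJpart]

theorem monomial_mul_linearForm_mem {b : σ →₀ ℕ} {j : σ} (hj : j ∈ b.support) :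
    monomial b 1 * linearForm M j ∈ quadricIdeal M := by
  have hb : b - Finsupp.single j 1 + Finsupp.single j 1 = b :=
    tsub_add_cancel_of_le (Finsupp.single_le_iff.mpr (Nat.one_le_iff_ne_zero.mpr
      (Finsupp.mem_support_iff.mp hj)))
  rw [← hb, monomial_add_single, pow_one, mul_assoc]
  exact Ideal.mul_mem_left _ _ (Ideal.subset_span ⟨j, rfl⟩)

/-- Cramer's rule on the support of `a` trades `y^a` for monomials with strictly larger support. -/
theorem exists_monomial_add_sum_mem [DecidableEq σ] {a : σ →₀ ℕ}
    (ha : (M.submatrix (Subtype.val : a.support → σ) Subtype.val).det ≠ 0) {i : σ}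
    (hai : 2 ≤ a i) :
    ∃ B : σ → K, monomial a 1 + ∑ k ∈ a.supportᶜ,
      C (B k) * monomial (a - Finsupp.single i 1 + Finsupp.single k 1) 1 ∈ quadricIdeal M := by
  set b := a - Finsupp.single i 1
  have hba : b + Finsupp.single i 1 = a :=
    tsub_add_cancel_of_le (Finsupp.single_le_iff.mpr (by omega))
  have hsupp : b.support = a.support := by
    ext j
    simp only [b, Finsupp.mem_support_iff, Finsupp.tsub_apply, Finsupp.single_apply]
    split_ifs with h <;> [subst h; skip] <;> omega
  obtain ⟨c, B, hcB⟩ := exists_sum_C_mul_linearForm_eq M ha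
    (Finsupp.mem_support_iff.mpr (by omega : a i ≠ 0))
  have hmem : monomial b 1 * ∑ j : a.support, C (c j) * linearForm M j ∈ quadricIdeal M := by
    rw [Finset.mul_sum]
    refine Ideal.sum_mem _ fun j _ => ?_
    rw [mul_left_comm]
    exact Ideal.mul_mem_left _ _ (monomial_mul_linearForm_mem M (hsupp.symm ▸ j.2))
  refine ⟨B, ?_⟩
  rwa [hcB, mul_add, ← pow_one (X i), ← monomial_add_single, hba, Finset.mul_sum,
    Finset.sum_congr rfl fun k _ => by
      rw [mul_left_comm, ← pow_one (X k), ← monomial_add_single]] at hmem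

end Quadrics

theorem monomial_eq_prod_X_support {R : Type*} [CommSemiring R] {a : σ →₀ ℕ}
    (ha : ∀ x, a x ≤ 1) : monomial a (1 : R) = ∏ i ∈ a.support, X i := by
  rw [monomial_eq, C_1, one_mul, Finsupp.prod]
  refine Finset.prod_congr rfl fun x hx => ?_
  rw [le_antisymm (ha x) (Nat.one_le_iff_ne_zero.mpr (Finsupp.mem_support_iff.mp hx)), pow_one]

variable (σ K) in
noncomputable def squarefreeSpan (d : ℕ) : Submodule K (MvPolynomial σ K) :=
  Submodule.span K (Set.range fun T : {T : Finset σ // #T = d} => ∏ i ∈ T.1, X i)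

theorem isHomogeneous_prod_X (T : Finset σ) :
    (∏ i ∈ T, X i : MvPolynomial σ K).IsHomogeneous #T := by
  simpa using IsHomogeneous.prod T (fun i => (X i : MvPolynomial σ K)) (fun _ => 1)
    fun i _ => isHomogeneous_X K i

theorem squarefreeSpan_le_homogeneousSubmodule (d : ℕ) :
    squarefreeSpan σ K d ≤ homogeneousSubmodule σ K d := by
  rw [squarefreeSpan, Submodule.span_le]
  rintro _ ⟨⟨T, rfl⟩, rfl⟩
  exact isHomogeneous_prod_X T

theorem homogeneousComponent_sum_smul_prod_X [Fintype σ] (g : Finset σ → K) (d : ℕ) :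
    homogeneousComponent d (∑ T, g T • ∏ i ∈ T, X i)
      = ∑ T : {T : Finset σ // #T = d}, g T • (∏ i ∈ T.1, X i : MvPolynomial σ K) := by
  rw [map_sum, ← Finset.sum_subtype (univ.filter fun T : Finset σ => #T = d) (by simp)
    fun T => g T • (∏ i ∈ T, X i : MvPolynomial σ K), Finset.sum_filter]
  refine Finset.sum_congr rfl fun T _ => ?_
  rw [map_smul, homogeneousComponent_of_mem (isHomogeneous_prod_X T), smul_ite, smul_zero]
  exact if_congr eq_comm rfl rfl

section PrincipalMinors

variable [Fintype σ] [DecidableEq σ] {M : Matrix σ σ K}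
  (hM : ∀ J : Finset σ, J.Nonempty →
    (M.submatrix (Subtype.val : J → σ) Subtype.val).det ≠ 0)
include hM

theorem monomial_mem_quadricIdeal_sup_squarefreeSpan (a : σ →₀ ℕ) :
    monomial a (1 : K) ∈ (quadricIdeal M).restrictScalars K ⊔ squarefreeSpan σ K a.degree := by
  induction hm : #a.supportᶜ using Nat.strong_induction_on generalizing a with
  | _ m ih =>
    by_cases hsq : ∀ x, a x ≤ 1
    · refine Submodule.mem_sup_right (Submodule.subset_span
        ⟨⟨a.support, (Finsupp.degree_eq_card_support hsq).symm⟩, ?_⟩)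
      exact (monomial_eq_prod_X_support hsq).symm
    push Not at hsq
    obtain ⟨i, hai⟩ := hsq
    obtain ⟨B, hB⟩ := exists_monomial_add_sum_mem M
      (hM a.support ⟨i, Finsupp.mem_support_iff.mpr (by omega)⟩) hai
    rw [← add_sub_cancel_right (monomial a 1) (∑ k ∈ a.supportᶜ, _)]
    refine Submodule.sub_mem _ (Submodule.mem_sup_left hB) (Submodule.sum_mem _ fun k hk => ?_)
    rw [← smul_eq_C_mul]
    refine Submodule.smul_mem _ _ ?_
    rw [← Finsupp.degree_sub_single_add_single (by omega : 1 ≤ a i) k]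
    refine ih _ ?_ _ rfl
    rw [← hm]
    exact Finset.card_lt_card (Finset.compl_ssubset_compl.mpr
      (Finsupp.support_ssubset_support_sub_single_add_single hai (Finset.mem_compl.mp hk)))

theorem homogeneousSubmodule_le_quadricIdeal_sup_squarefreeSpan (d : ℕ) :
    homogeneousSubmodule σ K d
      ≤ (quadricIdeal M).restrictScalars K ⊔ squarefreeSpan σ K d := by
  rw [homogeneousSubmodule_eq_finsupp_supported, AddMonoidAlgebra.supported_eq_span_single,
    Submodule.span_le]
  rintro _ ⟨a, rfl : a.degree = d, rfl⟩
  exact monomial_mem_quadricIdeal_sup_squarefreeSpan hM a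

theorem map_mkQ_homogeneousSubmodule_quadricIdeal (d : ℕ) :
    (homogeneousSubmodule σ K d).map ((quadricIdeal M).restrictScalars K).mkQ
      = (squarefreeSpan σ K d).map ((quadricIdeal M).restrictScalars K).mkQ := by
  refine le_antisymm ?_ (Submodule.map_mono (squarefreeSpan_le_homogeneousSubmodule d))
  calc _ ≤ ((quadricIdeal M).restrictScalars K ⊔ squarefreeSpan σ K d).map _ :=
        Submodule.map_mono (homogeneousSubmodule_le_quadricIdeal_sup_squarefreeSpan hM d)
    _ = _ := by rw [Submodule.map_sup, Submodule.mkQ_map_self, bot_sup_eq]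

theorem coeffNonneg_one_add_X_pow_sub_hilbertSeries_quadricIdeal :
    CoeffNonneg ((1 + PowerSeries.X) ^ Fintype.card σ - hilbertSeries (quadricIdeal M)) := by
  intro d
  rw [map_sub, PowerSeries.coeff_one_add_X_pow, hilbertSeries, PowerSeries.coeff_mk, sub_nonneg,
    Nat.cast_le, map_mkQ_homogeneousSubmodule_quadricIdeal hM, squarefreeSpan, Submodule.map_span,
    ← Set.range_comp]
  exact (finrank_range_le_card _).trans (Fintype.card_finset_len d).le

theorem hilbertSeries_quadricIdeal :
    hilbertSeries (quadricIdeal M) = (1 + PowerSeries.X) ^ Fintype.card σ := by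
  have hlower := coeffNonneg_evenSeries_pow_mul_hilbertSeries_sub
    (isHomogeneous_X_mul_linearForm M) Finset.univ
  rw [coe_univ, Set.image_univ, card_univ, hilbertSeries_bot] at hlower
  exact eq_one_add_X_pow_of_coeffNonneg
    (coeffNonneg_one_add_X_pow_sub_hilbertSeries_quadricIdeal hM) hlower

theorem finrank_map_mkQ_homogeneousSubmodule_quadricIdeal (d : ℕ) :
    Module.finrank K ((homogeneousSubmodule σ K d).map ((quadricIdeal M).restrictScalars K).mkQ)
      = (Fintype.card σ).choose d := by
  have h := congrArg (PowerSeries.coeff d) (hilbertSeries_quadricIdeal hM)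
  rwa [hilbertSeries, PowerSeries.coeff_mk, PowerSeries.coeff_one_add_X_pow, Nat.cast_inj] at h

theorem linearIndependent_mkQ_prod_X_of_card_eq (d : ℕ) :
    LinearIndependent K (fun T : {T : Finset σ // #T = d} =>
      ((quadricIdeal M).restrictScalars K).mkQ (∏ i ∈ T.1, X i)) := by
  rw [linearIndependent_iff_card_eq_finrank_span, Set.finrank, Set.range_comp',
    ← Submodule.map_span, ← squarefreeSpan, ← map_mkQ_homogeneousSubmodule_quadricIdeal hM,
    finrank_map_mkQ_homogeneousSubmodule_quadricIdeal hM, Fintype.card_finset_len]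

theorem linearIndependent_mkQ_prod_X :
    LinearIndependent K (fun T : Finset σ =>
      ((quadricIdeal M).restrictScalars K).mkQ (∏ i ∈ T, X i)) := by
  rw [Fintype.linearIndependent_iff]
  intro g hg T₀
  have hp : ∑ T, g T • ∏ i ∈ T, X i ∈ quadricIdeal M := by
    have h0 : ((quadricIdeal M).restrictScalars K).mkQ (∑ T, g T • ∏ i ∈ T, X i) = 0 := by
      simpa only [map_sum, map_smul] using hg
    exact (Submodule.Quotient.mk_eq_zero _).mp h0
  have hd := homogeneousComponent_mem_of_mem (isHomogeneous_quadricIdeal M) hp #T₀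
  rw [homogeneousComponent_sum_smul_prod_X] at hd
  refine Fintype.linearIndependent_iff.mp (linearIndependent_mkQ_prod_X_of_card_eq hM #T₀)
    (fun T => g T) ?_ ⟨T₀, rfl⟩
  have h0 : ((quadricIdeal M).restrictScalars K).mkQ
      (∑ T : {T : Finset σ // #T = #T₀}, g T • ∏ i ∈ T.1, X i) = 0 :=
    (Submodule.Quotient.mk_eq_zero _).mpr hd
  simpa only [map_sum, map_smul] using h0

theorem span_mkQ_prod_X_eq_top :
    Submodule.span K (Set.range fun T : Finset σ =>
      ((quadricIdeal M).restrictScalars K).mkQ (∏ i ∈ T, X i)) = ⊤ := by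
  rw [eq_top_iff]
  rintro x -
  obtain ⟨p, rfl⟩ := Submodule.mkQ_surjective _ x
  rw [← sum_homogeneousComponent p, map_sum]
  refine Submodule.sum_mem _ fun d _ => ?_
  have hd := Submodule.mem_map_of_mem (f := ((quadricIdeal M).restrictScalars K).mkQ)
    (homogeneousComponent_mem d p)
  rw [map_mkQ_homogeneousSubmodule_quadricIdeal hM, squarefreeSpan, Submodule.map_span] at hd
  refine Submodule.span_mono ?_ hd
  rintro _ ⟨_, ⟨T, rfl⟩, rfl⟩
  exact ⟨T.1, rfl⟩

noncomputable def squarefreeBasis :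
    Module.Basis (Finset σ) K (MvPolynomial σ K ⧸ (quadricIdeal M).restrictScalars K) :=
  Module.Basis.mk (linearIndependent_mkQ_prod_X hM) (span_mkQ_prod_X_eq_top hM).ge

end PrincipalMinors

end MvPolynomial

theorem hilbert_series_of_quotient_by_IM_general
    {K : Type*} [Field K] {n : ℕ}
    (M : Matrix (Fin n) (Fin n) K)
    (hmin : ∀ J : Finset (Fin n), J.Nonempty →
      (M.submatrix (Subtype.val : {x // x ∈ J} → Fin n) Subtype.val).det ≠ 0) :
    (∀ d : ℕ, Module.finrank K
        ((homogeneousSubmodule (Fin n) K d).map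
          ((Ideal.span (Set.range fun i : Fin n =>
              X i * ∑ j, C (M i j) * X j)).restrictScalars K).mkQ)
      = Nat.choose n d) ∧
    Module.Finite K
      (MvPolynomial (Fin n) K ⧸
        (Ideal.span (Set.range fun i : Fin n => X i * ∑ j, C (M i j) * X j) :
          Ideal (MvPolynomial (Fin n) K))) ∧
    Module.finrank K
      (MvPolynomial (Fin n) K ⧸
        (Ideal.span (Set.range fun i : Fin n => X i * ∑ j, C (M i j) * X j) :
          Ideal (MvPolynomial (Fin n) K)))
      = 2 ^ n := by
  rw [show Ideal.span (Set.range fun i : Fin n => X i * ∑ j, C (M i j) * X j)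
    = quadricIdeal M from rfl]
  have hdim := finrank_map_mkQ_homogeneousSubmodule_quadricIdeal hmin
  rw [Fintype.card_fin] at hdim
  let b := (squarefreeBasis hmin).map
    (Submodule.Quotient.restrictScalarsEquiv K (quadricIdeal M))
  refine ⟨hdim, Module.Finite.of_basis b, ?_⟩
  rw [Module.finrank_eq_card_basis b, Fintype.card_finset, Fintype.card_fin]

/-- If all principal minors of `M` are nonzero, then `S/I_M` has Hilbert series
`(1+t)^n`: its degree-`d` graded component has dimension `binomial(n,d)`, it is
finite-dimensional, and its total dimension over `K` is `2^n`. -/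
theorem hilbert_series_of_quotient_by_IM
    {K : Type*} [Field K] [CharZero K] {n : ℕ}
    (M : Matrix (Fin n) (Fin n) K)
    (hmin : ∀ J : Finset (Fin n), J.Nonempty →
      (M.submatrix (Subtype.val : {x // x ∈ J} → Fin n) Subtype.val).det ≠ 0) :
    (∀ d : ℕ, Module.finrank K
        ((homogeneousSubmodule (Fin n) K d).map
          ((Ideal.span (Set.range fun i : Fin n =>
              X i * ∑ j, C (M i j) * X j)).restrictScalars K).mkQ)
      = Nat.choose n d) ∧
    Module.Finite K
      (MvPolynomial (Fin n) K ⧸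
        (Ideal.span (Set.range fun i : Fin n => X i * ∑ j, C (M i j) * X j) :
          Ideal (MvPolynomial (Fin n) K))) ∧
    Module.finrank K
      (MvPolynomial (Fin n) K ⧸
        (Ideal.span (Set.range fun i : Fin n => X i * ∑ j, C (M i j) * X j) :
          Ideal (MvPolynomial (Fin n) K)))
      = 2 ^ n :=
  hilbert_series_of_quotient_by_IM_general M hmin
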